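/- Relaxing the Snoop-pushes-GO restriction breaks coherence: in the transition system where a device in transient state ISAD may process a SnpInv even when its H2D response channel is nonempty, there is a finite execution from the all-invalid initial state reaching a state in which device 1's cacheline is in state M and device 2's cacheline is in state S, violating SWMR. -/
import Mathlib


inductive CacheState : Type
  | M | S | I | ISAD | IMAD
  deriving DecidableEq

inductive HostState : Type
  | HM | HS | HI | HMA
  deriving DecidableEq

/-- Device-to-host requests. -/
inductive DReq : Type
  | RdOwn | RdShared
  deriving DecidableEq

open CacheState HostState DReq

/-- System state: two device cacheline states, D2H request channels,
device 2's H2D request (snoop) channel and D2H response channel,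
H2D response (GO) channels carrying target cache states, and a host state. -/
structure SysState where
  c1 : CacheState
  c2 : CacheState
  host : HostState
  dthReq1 : List DReq
  dthReq2 : List DReq
  htdReq2 : List Unit      -- SnpInv messages to device 2
  dthRsp2 : List Unit      -- RspIHitI messages from device 2
  htdRsp1 : List CacheState -- GO messages to device 1 (target state)
  htdRsp2 : List CacheState -- GO messages to device 2 (target state)

/-- Transition rules of the relaxed system. `isadSnpInv2Relaxed` processes a
snoop in state ISAD without requiring the H2D response channel to be empty. -/
inductive step : SysState → SysState → Prop
  | invalidStore1 (σ : SysState) (h : σ.c1 = I) :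
      step σ { σ with c1 := IMAD, dthReq1 := σ.dthReq1 ++ [RdOwn] }
  | invalidLoad2 (σ : SysState) (h : σ.c2 = I) :
      step σ { σ with c2 := ISAD, dthReq2 := σ.dthReq2 ++ [RdShared] }
  | hostRdShared2 (σ : SysState) (h1 : σ.host = HI) (h2 : σ.dthReq2.head? = some RdShared) :
      step σ { σ with host := HS, dthReq2 := σ.dthReq2.tail,
                      htdRsp2 := σ.htdRsp2 ++ [S] }
  | hostRdOwn1 (σ : SysState) (h1 : σ.host = HS) (h2 : σ.dthReq1.head? = some RdOwn) :
      step σ { σ with host := HMA, dthReq1 := σ.dthReq1.tail,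
                      htdReq2 := σ.htdReq2 ++ [()] }
  | isadSnpInv2Relaxed (σ : SysState) (h1 : σ.c2 = ISAD) (h2 : σ.htdReq2.head? = some ()) :
      step σ { σ with htdReq2 := σ.htdReq2.tail, dthRsp2 := σ.dthRsp2 ++ [()] }
  | isadGO2 (σ : SysState) (h1 : σ.c2 = ISAD) (h2 : σ.htdRsp2.head? = some S) :
      step σ { σ with c2 := S, htdRsp2 := σ.htdRsp2.tail }
  | maRspIHitI1 (σ : SysState) (h1 : σ.host = HMA) (h2 : σ.dthRsp2.head? = some ()) :
      step σ { σ with host := HM, dthRsp2 := σ.dthRsp2.tail,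
                      htdRsp1 := σ.htdRsp1 ++ [M] }
  | imadGO1 (σ : SysState) (h1 : σ.c1 = IMAD) (h2 : σ.htdRsp1.head? = some M) :
      step σ { σ with c1 := M, htdRsp1 := σ.htdRsp1.tail }

/-- The all-invalid initial state with empty channels. -/
def init : SysState :=
  { c1 := I, c2 := I, host := HI, dthReq1 := [], dthReq2 := [],
    htdReq2 := [], dthRsp2 := [], htdRsp1 := [], htdRsp2 := [] }

/-- Relaxing Snoop-pushes-GO breaks coherence: a state with device 1 in M
and device 2 in S (violating SWMR) is reachable. -/
theorem relaxed_snoop_breaks_coherence :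
    ∃ σ : SysState, Relation.ReflTransGen step init σ ∧ σ.c1 = M ∧ σ.c2 = S := by
  refine ⟨{ c1 := M, c2 := S, host := HM, dthReq1 := [], dthReq2 := [],
            htdReq2 := [], dthRsp2 := [], htdRsp1 := [], htdRsp2 := [] }, ?_, rfl, rfl⟩
  apply Relation.ReflTransGen.tail (b :=
    { c1 := M, c2 := ISAD, host := HM, dthReq1 := [], dthReq2 := [],
      htdReq2 := [], dthRsp2 := [], htdRsp1 := [], htdRsp2 := [S] })
  apply Relation.ReflTransGen.tail (b :=
    { c1 := IMAD, c2 := ISAD, host := HM, dthReq1 := [], dthReq2 := [],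
      htdReq2 := [], dthRsp2 := [], htdRsp1 := [M], htdRsp2 := [S] })
  apply Relation.ReflTransGen.tail (b :=
    { c1 := IMAD, c2 := ISAD, host := HMA, dthReq1 := [], dthReq2 := [],
      htdReq2 := [], dthRsp2 := [()], htdRsp1 := [], htdRsp2 := [S] })
  apply Relation.ReflTransGen.tail (b :=
    { c1 := IMAD, c2 := ISAD, host := HMA, dthReq1 := [], dthReq2 := [],
      htdReq2 := [()], dthRsp2 := [], htdRsp1 := [], htdRsp2 := [S] })
  apply Relation.ReflTransGen.tail (b :=
    { c1 := IMAD, c2 := ISAD, host := HS, dthReq1 := [RdOwn], dthReq2 := [],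
      htdReq2 := [], dthRsp2 := [], htdRsp1 := [], htdRsp2 := [S] })
  apply Relation.ReflTransGen.tail (b :=
    { c1 := I, c2 := ISAD, host := HS, dthReq1 := [], dthReq2 := [],
      htdReq2 := [], dthRsp2 := [], htdRsp1 := [], htdRsp2 := [S] })
  apply Relation.ReflTransGen.tail (b :=
    { c1 := I, c2 := ISAD, host := HI, dthReq1 := [], dthReq2 := [RdShared],
      htdReq2 := [], dthRsp2 := [], htdRsp1 := [], htdRsp2 := [] })
  apply Relation.ReflTransGen.tail (b := init)
  · exact Relation.ReflTransGen.refl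
  · exact step.invalidLoad2 _ rfl
  · exact step.hostRdShared2 _ rfl rfl
  · exact step.invalidStore1 _ rfl
  · exact step.hostRdOwn1 _ rfl rfl
  · exact step.isadSnpInv2Relaxed _ rfl rfl
  · exact step.maRspIHitI1 _ rfl rfl
  · exact step.imadGO1 _ rfl rfl
  · exact step.isadGO2 _ rfl rfl
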